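/- Let D = (A,B) be any orientation of the complete bipartite graph K_{n,m} with n ≤ m, and let r be a positive integer with n ≥ r·2^r·(1 + 1/2^r)^r + 2r − 1. Then dib(D) ≥ r. -/

import Mathlib

/-!
Double counting pairs `(b, S)`, with `b ∈ B` and `S` an `r`-subset of `A` lying in the
in-neighbourhood or in the out-neighbourhood of `b`: since `x ↦ C(x, r)` is convex, each `b`
contributes at least `2 C(⌊n/2⌋, r)` pairs, whereas without a one-way `K_{r,r}` every `S` is
counted at most `2 (r - 1)` times; the bound on `n` makes this impossible.

A one-way `K_{r,r}` with parts `{x_i}`, `{y_i}` gives a b-coloring with `r` colors: `x_i` and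
`y_i` get color `i`, the rest of `A` color `0` and the rest of `B` color `1`. Every color class
meets one of the parts in at most one vertex, so a cycle inside it would be a digon.
For `r = 1` color by sides, or with one color when all arcs point the same way.
-/

open Classical

/-- A closed directed walk of length `n+1` inside the set `S`. -/
def IsClosedWalkIn {V : Type*} (E : V → V → Prop) (S : Set V) (n : ℕ)
    (c : Fin (n + 1) → V) : Prop :=
  (∀ i, c i ∈ S) ∧ ∀ i : Fin (n + 1), E (c i) (c (i + 1))

/-- The set `S` induces no directed cycle (equivalently, no closed directed walk). -/
def AcyclicSet {V : Type*} (E : V → V → Prop) (S : Set V) : Prop :=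
  ¬ ∃ (n : ℕ) (c : Fin (n + 1) → V), IsClosedWalkIn E S n c

/-- An acyclic coloring: every color class induces no directed cycle. -/
def AcyclicColoring {V : Type*} (E : V → V → Prop) {k : ℕ} (Γ : V → Fin k) : Prop :=
  ∀ i : Fin k, AcyclicSet E {v | Γ v = i}

/-- `u` is a b⁺-vertex: it has an out-neighbor of every other color. -/
def IsBPlus {V : Type*} (E : V → V → Prop) {k : ℕ} (Γ : V → Fin k) (u : V) : Prop :=
  ∀ j : Fin k, j ≠ Γ u → ∃ w, E u w ∧ Γ w = j

/-- `u` is a b⁻-vertex: it has an in-neighbor of every other color. -/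
def IsBMinus {V : Type*} (E : V → V → Prop) {k : ℕ} (Γ : V → Fin k) (u : V) : Prop :=
  ∀ j : Fin k, j ≠ Γ u → ∃ w, E w u ∧ Γ w = j

/-- A b-coloring: an acyclic coloring in which every color class contains a
b⁺-vertex and a b⁻-vertex. -/
def IsBColoring {V : Type*} (E : V → V → Prop) {k : ℕ} (Γ : V → Fin k) : Prop :=
  AcyclicColoring E Γ ∧
    ∀ i : Fin k, (∃ u, Γ u = i ∧ IsBPlus E Γ u) ∧ (∃ u, Γ u = i ∧ IsBMinus E Γ u)

/-- The dib-chromatic number: the maximum number of colors of a b-coloring. -/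
noncomputable def dib {V : Type*} (E : V → V → Prop) : ℕ :=
  sSup {k | ∃ Γ : V → Fin k, IsBColoring E Γ}

/-- The dichromatic number: the minimum number of colors of an acyclic coloring. -/
noncomputable def dc {V : Type*} (E : V → V → Prop) : ℕ :=
  sInf {k | ∃ Γ : V → Fin k, AcyclicColoring E Γ}

/-- Out-degree. -/
noncomputable def outDeg {V : Type*} (E : V → V → Prop) (v : V) : ℕ := {w | E v w}.ncard

/-- In-degree. -/
noncomputable def inDeg {V : Type*} (E : V → V → Prop) (v : V) : ℕ := {w | E w v}.ncard

/-- `(A, B)` is a bipartition of the digraph: the parts are disjoint independent sets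
covering all vertices, and every arc goes between the parts. -/
def IsBipartition {V : Type*} (E : V → V → Prop) (A B : Set V) : Prop :=
  Disjoint A B ∧ A ∪ B = Set.univ ∧
    ∀ u v, E u v → (u ∈ A ∧ v ∈ B) ∨ (u ∈ B ∧ v ∈ A)

/-- The digraph is weakly connected. -/
def WeaklyConnected {V : Type*} (E : V → V → Prop) : Prop :=
  ∀ u v : V, Relation.ReflTransGen (fun a b => E a b ∨ E b a) u v

/-- The set `S` is weakly connected in the induced subdigraph. -/
def WeaklyConnectedOn {V : Type*} (E : V → V → Prop) (S : Set V) : Prop :=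
  ∀ ⦃u⦄, u ∈ S → ∀ ⦃v⦄, v ∈ S →
    Relation.ReflTransGen (fun a b => (E a b ∨ E b a) ∧ a ∈ S ∧ b ∈ S) u v

/-- A simple digraph (oriented graph): no digons. -/
def SimpleDigraph' {V : Type*} (E : V → V → Prop) : Prop :=
  ∀ u v, E u v → ¬ E v u

namespace Nat

theorem choose_succ_add_choose_le {p q : ℕ} (hpq : p ≤ q) (r : ℕ) :
    (p + 1).choose r + q.choose r ≤ p.choose r + (q + 1).choose r := by
  cases r with
  | zero => simp
  | succ s =>
    rw [choose_succ_succ' p, choose_succ_succ' q]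
    have := choose_le_choose s hpq
    omega

theorem two_mul_choose_div_two_le_of_le (r : ℕ) {p q : ℕ} (hpq : p ≤ q) :
    2 * ((p + q) / 2).choose r ≤ p.choose r + q.choose r := by
  by_cases hgap : q ≤ p + 1
  · rw [show (p + q) / 2 = p by omega]
    have := choose_le_choose r hpq
    omega
  · obtain ⟨q, rfl⟩ : ∃ q', q = q' + 1 := ⟨q - 1, by omega⟩
    have ih := two_mul_choose_div_two_le_of_le r (p := p + 1) (q := q) (by omega)
    have hstep := choose_succ_add_choose_le (p := p) (q := q) (by omega) r
    rw [show p + 1 + q = p + (q + 1) by omega] at ih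
    omega
termination_by q - p

theorem two_mul_choose_div_two_le {p q n : ℕ} (h : p + q = n) (r : ℕ) :
    2 * (n / 2).choose r ≤ p.choose r + q.choose r := by
  subst h
  rcases le_total p q with hpq | hqp
  · exact two_mul_choose_div_two_le_of_le r hpq
  · rw [add_comm p, add_comm (p.choose r)]
    exact two_mul_choose_div_two_le_of_le r hqp

theorem cast_descFactorial_le_pow_mul {n h r : ℕ} (K : ℝ) (hrn : r ≤ n) (hrh : r ≤ h)
    (hfac : ∀ i < r, (n - i : ℝ) ≤ K * (h - i)) :
    (n.descFactorial r : ℝ) ≤ K ^ r * h.descFactorial r := by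
  have hcast : ∀ m, r ≤ m →
      (m.descFactorial r : ℝ) = ∏ i ∈ Finset.range r, ((m : ℝ) - i) := by
    intro m hm
    rw [descFactorial_eq_prod_range, cast_prod]
    exact Finset.prod_congr rfl fun i hi => cast_sub (by have := Finset.mem_range.mp hi; omega)
  calc (n.descFactorial r : ℝ) = ∏ i ∈ Finset.range r, ((n : ℝ) - i) := hcast n hrn
    _ ≤ ∏ i ∈ Finset.range r, (K * ((h : ℝ) - i)) := by
      refine Finset.prod_le_prod (fun i hi => ?_) (fun i hi => hfac i (by simpa using hi))
      have : i < n := by have := Finset.mem_range.mp hi; omega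
      exact sub_nonneg.mpr (by exact_mod_cast this.le)
    _ = K ^ r * h.descFactorial r := by
      rw [Finset.prod_mul_distrib, Finset.prod_const, Finset.card_range, hcast h hrh]

end Nat

namespace Finset

variable {α β : Type*}

theorem powersetCard_filter (X : Finset α) (p : α → Prop) [DecidablePred p] (r : ℕ) :
    (X.filter p).powersetCard r = (X.powersetCard r).filter (fun S => ∀ a ∈ S, p a) := by
  ext S
  simp only [mem_powersetCard, mem_filter, subset_iff]
  grind

theorem sum_choose_card_filter_le_of_biclique_free (R : α → β → Prop)
    [∀ a b, Decidable (R a b)] (X : Finset α) (Y : Finset β) (r : ℕ)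
    (hfree : ∀ S ⊆ X, #S = r → ∀ T ⊆ Y, #T = r → ¬ ∀ a ∈ S, ∀ b ∈ T, R a b) :
    ∑ b ∈ Y, (#(X.filter (R · b))).choose r ≤ (r - 1) * (#X).choose r := by
  calc ∑ b ∈ Y, (#(X.filter (R · b))).choose r
      = ∑ b ∈ Y, #((X.powersetCard r).bipartiteBelow (fun S b => ∀ a ∈ S, R a b) b) := by
        simp only [← card_powersetCard, powersetCard_filter, bipartiteBelow]
    _ = ∑ S ∈ X.powersetCard r, #(Y.bipartiteAbove (fun S b => ∀ a ∈ S, R a b) S) :=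
        (sum_card_bipartiteAbove_eq_sum_card_bipartiteBelow _).symm
    _ ≤ ∑ _S ∈ X.powersetCard r, (r - 1) := by
        refine sum_le_sum fun S hS => ?_
        obtain ⟨hSX, hSr⟩ := mem_powersetCard.mp hS
        by_contra! hlarge
        obtain ⟨T, hT, hTr⟩ := exists_subset_card_eq (Nat.le_of_pred_lt hlarge)
        refine hfree S hSX hSr T (hT.trans (filter_subset _ _)) hTr fun a ha b hb => ?_
        exact (mem_filter.mp (hT hb)).2 a ha
    _ = (r - 1) * (#X).choose r := by rw [sum_const, card_powersetCard, smul_eq_mul, mul_comm]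

theorem exists_monochromatic_biclique (R : α → β → Prop) (X : Finset α) (Y : Finset β)
    {r : ℕ} (hcount : (r - 1) * (#X).choose r < #Y * (#X / 2).choose r) :
    ∃ S ⊆ X, ∃ T ⊆ Y, #S = r ∧ #T = r ∧
      ((∀ a ∈ S, ∀ b ∈ T, R a b) ∨ ∀ a ∈ S, ∀ b ∈ T, ¬ R a b) := by
  by_contra hno
  have hR := sum_choose_card_filter_le_of_biclique_free R X Y r
    fun S hS hSr T hT hTr h => hno ⟨S, hS, T, hT, hSr, hTr, Or.inl h⟩
  have hnR := sum_choose_card_filter_le_of_biclique_free (fun a b => ¬ R a b) X Y r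
    fun S hS hSr T hT hTr h => hno ⟨S, hS, T, hT, hSr, hTr, Or.inr h⟩
  have hlow : #Y * (2 * (#X / 2).choose r) ≤
      ∑ b ∈ Y, ((#(X.filter (R · b))).choose r + (#(X.filter (¬ R · b))).choose r) := by
    simpa only [smul_eq_mul] using card_nsmul_le_sum Y _ _ fun b _ =>
      Nat.two_mul_choose_div_two_le (card_filter_add_card_filter_not (R · b)) r
  rw [sum_add_distrib, mul_left_comm] at hlow
  omega

end Finset

theorem sub_one_mul_choose_lt_mul_choose_half {n r : ℕ} (hr : 1 ≤ r)
    (hn : (r : ℝ) * 2 ^ r * (1 + 1 / 2 ^ r) ^ r + 2 * r - 1 ≤ n) :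
    (r - 1) * n.choose r < n * (n / 2).choose r := by
  set c : ℝ := 2 * (1 + 1 / 2 ^ r) with hc
  have h2r : (1 : ℝ) ≤ 2 ^ r := one_le_pow₀ (by norm_num)
  have hcr : (2 : ℝ) ^ r ≤ c ^ r := pow_le_pow_left₀ (by norm_num) (by rw [hc]; simp) r
  have hn' : r * c ^ r + 2 * r - 1 ≤ (n : ℝ) := by rwa [hc, mul_pow, ← mul_assoc]
  have hr' : (1 : ℝ) ≤ r := by exact_mod_cast hr
  have hrh : r ≤ n / 2 := by
    have : ((2 * r : ℕ) : ℝ) ≤ n := by push_cast; nlinarith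
    exact (Nat.le_div_iff_mul_le two_pos).mpr (by exact_mod_cast (mul_comm 2 r) ▸ this)
  have hhalf : (n : ℝ) - 1 ≤ 2 * (n / 2 : ℕ) := by
    have : n ≤ 2 * (n / 2) + 1 := by omega
    have : (n : ℝ) ≤ 2 * (n / 2 : ℕ) + 1 := by exact_mod_cast this
    linarith
  have hfac : ∀ i < r, (n - i : ℝ) ≤ c * ((n / 2 : ℕ) - i) := by
    intro i hi
    have hi : (i : ℝ) + 1 ≤ r := by exact_mod_cast hi
    have hgap : (i : ℝ) + 1 ≤ (n - 1 - 2 * i) / 2 ^ r := by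
      rw [le_div_iff₀ (by positivity)]
      nlinarith
    calc (n - i : ℝ) ≤ (n - 1 - 2 * i) + (n - 1 - 2 * i) / 2 ^ r := by linarith
      _ = (1 + 1 / 2 ^ r) * (n - 1 - 2 * i) := by ring
      _ ≤ (1 + 1 / 2 ^ r) * (2 * ((n / 2 : ℕ) - i)) := by gcongr; linarith
      _ = c * ((n / 2 : ℕ) - i) := by ring
  have hdesc := Nat.cast_descFactorial_le_pow_mul c (hrh.trans (Nat.div_le_self n 2)) hrh hfac
  have hpos : (0 : ℝ) < (n / 2).descFactorial r := by
    exact_mod_cast Nat.descFactorial_pos.mpr hrh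
  have hreal : ((r - 1 : ℕ) : ℝ) * n.descFactorial r < n * (n / 2).descFactorial r := by
    rw [Nat.cast_sub hr, Nat.cast_one]
    calc (r - 1 : ℝ) * n.descFactorial r ≤ (r - 1) * (c ^ r * (n / 2).descFactorial r) := by
          gcongr
      _ = ((r - 1) * c ^ r) * (n / 2).descFactorial r := by ring
      _ < n * (n / 2).descFactorial r := by gcongr; nlinarith
  have hnat : (r - 1) * (r.factorial * n.choose r) < n * (r.factorial * (n / 2).choose r) := by
    simp only [← Nat.descFactorial_eq_factorial_mul_choose]
    exact_mod_cast hreal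
  rw [mul_left_comm, mul_left_comm n] at hnat
  exact Nat.lt_of_mul_lt_mul_left hnat

section Digraph

variable {V : Type*} {E : V → V → Prop} {A B : Set V}

theorem IsBColoring.surjective {k : ℕ} {Γ : V → Fin k} (h : IsBColoring E Γ) :
    Function.Surjective Γ := fun i =>
  let ⟨u, hu, _⟩ := (h.2 i).1
  ⟨u, hu⟩

theorem IsBColoring.le_dib [Finite V] {k : ℕ} {Γ : V → Fin k} (h : IsBColoring E Γ) :
    k ≤ dib E := by
  refine le_csSup ⟨Nat.card V, ?_⟩ ⟨Γ, h⟩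
  rintro k' ⟨Γ', hΓ'⟩
  simpa using Nat.card_le_card_of_surjective Γ' hΓ'.surjective

namespace IsBipartition

theorem symm (h : IsBipartition E A B) : IsBipartition E B A :=
  ⟨h.1.symm, Set.union_comm A B ▸ h.2.1, fun u v huv => (h.2.2 u v huv).symm⟩

theorem mem_or_mem (h : IsBipartition E A B) (v : V) : v ∈ A ∨ v ∈ B :=
  (Set.ext_iff.mp h.2.1 v).mpr trivial

theorem notMem_right_of_mem_left (h : IsBipartition E A B) {v : V} (hv : v ∈ A) : v ∉ B :=
  Set.disjoint_left.mp h.1 hv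

theorem mem_right_of_adj (h : IsBipartition E A B) {u v : V} (huv : E u v) (hu : u ∈ A) :
    v ∈ B := by
  rcases h.2.2 u v huv with ⟨-, hv⟩ | ⟨hu', -⟩
  · exact hv
  · exact absurd hu' (h.notMem_right_of_mem_left hu)

/-- A closed walk alternates between the parts, so two steps after a vertex `w ∈ B` it is back
at `w` and the walk contains a digon. -/
theorem acyclicSet_of_subsingleton_inter (h : IsBipartition E A B) (hsimple : SimpleDigraph' E)
    {S : Set V} (hS : (S ∩ B).Subsingleton) : AcyclicSet E S := by
  rintro ⟨k, c, hcS, hc⟩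
  obtain ⟨i, hiB⟩ : ∃ i, c i ∈ B := by
    rcases h.mem_or_mem (c 0) with h0 | h0
    · exact ⟨0 + 1, h.mem_right_of_adj (hc 0) h0⟩
    · exact ⟨0, h0⟩
  have hA : c (i + 1) ∈ A := h.symm.mem_right_of_adj (hc i) hiB
  have hB : c (i + 1 + 1) ∈ B := h.mem_right_of_adj (hc (i + 1)) hA
  have hret : c (i + 1 + 1) = c i := hS ⟨hcS _, hB⟩ ⟨hcS _, hiB⟩
  exact hsimple _ _ (hc i) (hret ▸ hc (i + 1))

theorem acyclicSet_univ (h : IsBipartition E A B) (hBA : ∀ u ∈ B, ∀ v ∈ A, ¬ E u v) :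
    AcyclicSet E Set.univ := by
  rintro ⟨k, c, -, hc⟩
  rcases h.mem_or_mem (c 0) with h0 | h0
  · have h1 := h.mem_right_of_adj (hc 0) h0
    exact hBA _ h1 _ (h.symm.mem_right_of_adj (hc (0 + 1)) h1) (hc (0 + 1))
  · exact hBA _ h0 _ (h.symm.mem_right_of_adj (hc 0) h0) (hc 0)

theorem exists_isBColoring_of_biclique (h : IsBipartition E A B) (hsimple : SimpleDigraph' E)
    {r : ℕ} (hr : 2 ≤ r) {S T : Finset V} (hSA : ↑S ⊆ A) (hTB : ↑T ⊆ B)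
    (hS : S.card = r) (hT : T.card = r) (hST : ∀ a ∈ S, ∀ b ∈ T, E a b) :
    ∃ Γ : V → Fin r, IsBColoring E Γ := by
  let eS := S.equivFinOfCardEq hS
  let eT := T.equivFinOfCardEq hT
  let c₀ : Fin r := ⟨0, by omega⟩
  let c₁ : Fin r := ⟨1, by omega⟩
  have hc : c₀ ≠ c₁ := by simp [c₀, c₁, Fin.ext_iff]
  let Γ : V → Fin r := fun v =>
    if hv : v ∈ S then eS ⟨v, hv⟩
    else if hv : v ∈ T then eT ⟨v, hv⟩
    else if v ∈ A then c₀ else c₁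
  have hΓS : ∀ i, Γ (eS.symm i) = i := by intro i; simp [Γ]
  have hΓT : ∀ i, Γ (eT.symm i) = i := by
    intro i
    have : (eT.symm i : V) ∉ S := fun h' =>
      h.notMem_right_of_mem_left (hSA h') (hTB (eT.symm i).2)
    simp [Γ, this]
  have hclassA : ∀ v ∈ A, Γ v ≠ c₀ → v = eS.symm (Γ v) := by
    intro v hv hne
    by_cases hvS : v ∈ S
    · simp [Γ, hvS]
    · have hvT : v ∉ T := fun h' => h.notMem_right_of_mem_left hv (hTB h')
      simp [Γ, hvS, hvT, hv] at hne
  have hclassB : ∀ v ∈ B, Γ v ≠ c₁ → v = eT.symm (Γ v) := by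
    intro v hv hne
    have hvS : v ∉ S := fun h' => h.notMem_right_of_mem_left (hSA h') hv
    by_cases hvT : v ∈ T
    · simp [Γ, hvS, hvT]
    · have hvA : v ∉ A := fun h' => h.notMem_right_of_mem_left h' hv
      simp [Γ, hvS, hvT, hvA] at hne
  refine ⟨Γ, fun i => ?_, fun i =>
    ⟨⟨eS.symm i, hΓS i, fun j _ => ?_⟩, ⟨eT.symm i, hΓT i, fun j _ => ?_⟩⟩⟩
  · by_cases hi : i = c₁
    · refine h.symm.acyclicSet_of_subsingleton_inter hsimple
        ((Set.subsingleton_singleton (a := (eS.symm i : V))).anti ?_)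
      rintro v ⟨hvi, hvA⟩
      have hvi : Γ v = i := hvi
      exact hvi ▸ hclassA v hvA (hvi ▸ hi ▸ hc.symm)
    · refine h.acyclicSet_of_subsingleton_inter hsimple
        ((Set.subsingleton_singleton (a := (eT.symm i : V))).anti ?_)
      rintro v ⟨hvi, hvB⟩
      have hvi : Γ v = i := hvi
      exact hvi ▸ hclassB v hvB (hvi ▸ hi)
  · exact ⟨eT.symm j, hST _ (eS.symm i).2 _ (eT.symm j).2, hΓT j⟩
  · exact ⟨eS.symm j, hST _ (eS.symm j).2 _ (eT.symm i).2, hΓS j⟩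

theorem isBColoring_sides (h : IsBipartition E A B) (hsimple : SimpleDigraph' E) {a a' b b' : V}
    (ha : a ∈ A) (ha' : a' ∈ A) (hb : b ∈ B) (hb' : b' ∈ B) (hab : E a b) (hba : E b' a') :
    IsBColoring E (fun v => if v ∈ A then (0 : Fin 2) else 1) := by
  have hA : ∀ v ∈ A, (if v ∈ A then (0 : Fin 2) else 1) = 0 := fun v hv => if_pos hv
  have hB : ∀ v ∈ B, (if v ∈ A then (0 : Fin 2) else 1) = 1 := fun v hv =>
    if_neg fun hv' => h.notMem_right_of_mem_left hv' hv
  refine ⟨fun i => ?_, fun i => ?_⟩ <;> fin_cases i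
  · refine h.acyclicSet_of_subsingleton_inter hsimple
      (Set.subsingleton_empty.anti fun v ⟨hv, hvB⟩ => ?_)
    exact h.notMem_right_of_mem_left (by simpa using hv) hvB
  · refine h.symm.acyclicSet_of_subsingleton_inter hsimple
      (Set.subsingleton_empty.anti fun v ⟨hv, hvA⟩ => ?_)
    exact (by simpa using hv : v ∉ A) hvA
  · refine ⟨⟨a, hA a ha, fun j hj => ⟨b, hab, ?_⟩⟩,
      ⟨a', hA a' ha', fun j hj => ⟨b', hba, ?_⟩⟩⟩ <;>
      fin_cases j <;> simp_all
  · refine ⟨⟨b', hB b' hb', fun j hj => ⟨a', hba, ?_⟩⟩,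
      ⟨b, hB b hb, fun j hj => ⟨a, hab, ?_⟩⟩⟩ <;>
      fin_cases j <;> simp_all

end IsBipartition

theorem isBColoring_const (hE : AcyclicSet E Set.univ) (u : V) :
    IsBColoring E (fun _ : V => (0 : Fin 1)) := by
  have hnone : ∀ j i : Fin 1, j ≠ i → False := fun j i hj => hj (Subsingleton.elim j i)
  refine ⟨fun i => ?_, fun i =>
    ⟨⟨u, Subsingleton.elim _ _, fun j hj => (hnone _ _ hj).elim⟩,
      ⟨u, Subsingleton.elim _ _, fun j hj => (hnone _ _ hj).elim⟩⟩⟩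
  obtain rfl := Subsingleton.elim i 0
  simpa using hE

theorem IsBipartition.one_le_dib [Finite V] (h : IsBipartition E A B) (hsimple : SimpleDigraph' E)
    (hA : A.Nonempty) : 1 ≤ dib E := by
  by_cases hboth : (∃ a ∈ A, ∃ b ∈ B, E a b) ∧ ∃ b ∈ B, ∃ a ∈ A, E b a
  · obtain ⟨⟨a, ha, b, hb, hab⟩, b', hb', a', ha', hba⟩ := hboth
    exact one_le_two.trans (h.isBColoring_sides hsimple ha ha' hb hb' hab hba).le_dib
  · have hacyc : AcyclicSet E Set.univ := by
      rcases not_and_or.mp hboth with hAB | hBA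
      · push Not at hAB
        exact h.symm.acyclicSet_univ hAB
      · push Not at hBA
        exact h.acyclicSet_univ hBA
    obtain ⟨u, -⟩ := hA
    exact (isBColoring_const hacyc u).le_dib

end Digraph

/-- any orientation of K_{n,m} with n ≤ m and
n ≥ r·2^r·(1 + 1/2^r)^r + 2r − 1 has dib ≥ r. -/
theorem stmt17 {V : Type*} [Fintype V] (E : V → V → Prop) (A B : Set V)
    (hbip : IsBipartition E A B) (hsimple : SimpleDigraph' E)
    (horient : ∀ a ∈ A, ∀ b ∈ B, E a b ∨ E b a)
    (n m : ℕ) (hA : A.ncard = n) (hB : B.ncard = m) (hnm : n ≤ m)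
    (r : ℕ) (hr : 1 ≤ r)
    (hineq : (r : ℝ) * 2 ^ r * (1 + 1 / 2 ^ r) ^ r + 2 * (r : ℝ) - 1 ≤ (n : ℝ)) :
    r ≤ dib E := by
  obtain hr1 | hr2 := Nat.lt_or_ge r 2
  · obtain rfl : r = 1 := by omega
    have hn : n ≠ 0 := by rintro rfl; norm_num at hineq
    exact hbip.one_le_dib hsimple (Set.nonempty_of_ncard_ne_zero (hA ▸ hn))
  have hcount : (r - 1) * A.toFinset.card.choose r <
      B.toFinset.card * (A.toFinset.card / 2).choose r := by
    rw [← Set.ncard_eq_toFinset_card', ← Set.ncard_eq_toFinset_card', hA, hB]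
    exact (sub_one_mul_choose_lt_mul_choose_half hr hineq).trans_le (Nat.mul_le_mul_right _ hnm)
  obtain ⟨S, hSA, T, hTB, hS, hT, hST | hST⟩ :=
    Finset.exists_monochromatic_biclique E _ _ hcount
  · obtain ⟨Γ, hΓ⟩ := hbip.exists_isBColoring_of_biclique hsimple hr2
      (Set.subset_toFinset.mp hSA) (Set.subset_toFinset.mp hTB) hS hT hST
    exact hΓ.le_dib
  · obtain ⟨Γ, hΓ⟩ := hbip.symm.exists_isBColoring_of_biclique hsimple hr2
      (Set.subset_toFinset.mp hTB) (Set.subset_toFinset.mp hSA) hT hS fun b hb a ha =>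
        (horient a (Set.mem_toFinset.mp (hSA ha)) b (Set.mem_toFinset.mp (hTB hb))).resolve_left
          (hST a ha b hb)
    exact hΓ.le_dib
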